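/- arXiv:0810.4068 — 2 statements merged into one kernel-verified Lean document; each statement's English description precedes it below -/
import Mathlib

section
/- Let P be a partially ordered set and let (F_n)_{n<ω} be a sequence of antitone functions P → ℝ taking values in [0,1] (antitone meaning q ≤ p implies F_n(q) ≤ F_n(p)). Define G : P → ℝ by G(p) = inf_n F_n(p). Then for every p ∈ P: G^w(p) = sup_{q ≤ p} inf_{q' ≤ q} inf_n F_n^w(q'). -/
/-!
Both sides are suprema over `q ≤ p` of infima over the down-set of `q`, so it suffices that
`G = ⨅ n, F n` and `H = ⨅ n, (F n)^w` have the same infimum over every down-set `↓q`.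
Monotonicity gives `(F n)^w ≤ F n`, hence `H ≤ G`. Conversely, for `q' ≤ q` the infimum of `G`
over `↓q` is at most the infimum of `F n` over `↓q'`, which is one of the terms of the supremum
defining `(F n)^w(q')`.
-/

/-- The weak regularization of `F : P → ℝ`:
`F^w(p) = sup_{q ≤ p} inf_{q' ≤ q} F(q')`. -/
noncomputable def wreg {P : Type*} [PartialOrder P] (F : P → ℝ) (p : P) : ℝ :=
  ⨆ q : {q : P // q ≤ p}, ⨅ q' : {q' : P // q' ≤ (q : P)}, F (q' : P)

open Set

section DownInf

variable {P : Type*}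

instance instNonemptySubtypeLe [Preorder P] (q : P) : Nonempty {q' : P // q' ≤ q} :=
  ⟨⟨q, le_rfl⟩⟩

noncomputable def downInf [Preorder P] (F : P → ℝ) (q : P) : ℝ :=
  ⨅ q' : {q' : P // q' ≤ q}, F q'

section Preorder

variable [Preorder P] {F G : P → ℝ}

lemma BddBelow.range_restrict_downset (hF : BddBelow (range F)) (q : P) :
    BddBelow (range fun q' : {q' : P // q' ≤ q} => F q') :=
  hF.mono (range_comp_subset_range Subtype.val F)

lemma downInf_le (hF : BddBelow (range F)) {q' q : P} (h : q' ≤ q) : downInf F q ≤ F q' :=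
  ciInf_le (hF.range_restrict_downset q) ⟨q', h⟩

lemma downInf_antitone (hF : BddBelow (range F)) : Antitone (downInf F) :=
  fun _ _ h => le_ciInf fun r => downInf_le hF (r.2.trans h)

lemma downInf_mono (hF : BddBelow (range F)) (h : F ≤ G) : downInf F ≤ downInf G :=
  fun q => ciInf_mono (hF.range_restrict_downset q) fun r => h r

lemma bddAbove_range_downInf_of_monotone (hmono : Monotone F) (hF : BddBelow (range F)) (p : P) :
    BddAbove (range fun q : {q : P // q ≤ p} => downInf F q) :=
  ⟨F p, by rintro _ ⟨q, rfl⟩; exact (downInf_le hF le_rfl).trans (hmono q.2)⟩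

end Preorder

section PartialOrder

variable [PartialOrder P] {F : P → ℝ}

lemma wreg_eq_iSup_downInf (p : P) : wreg F p = ⨆ q : {q : P // q ≤ p}, downInf F q := rfl

lemma Monotone.wreg_le (hmono : Monotone F) (hF : BddBelow (range F)) (p : P) :
    wreg F p ≤ F p :=
  ciSup_le fun q => (downInf_le hF le_rfl).trans (hmono q.2)

lemma Monotone.downInf_le_wreg (hmono : Monotone F) (hF : BddBelow (range F)) {q' q : P}
    (h : q' ≤ q) : downInf F q ≤ wreg F q' :=
  le_ciSup_of_le (bddAbove_range_downInf_of_monotone hmono hF q') ⟨q', le_rfl⟩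
    (downInf_antitone hF h)

lemma downInf_iInf_wreg {ι : Type*} [Nonempty ι] {F : ι → P → ℝ} (h0 : ∀ i p, 0 ≤ F i p)
    (hmono : ∀ i, Monotone (F i)) :
    downInf (fun p => ⨅ i, wreg (F i) p) = downInf (fun p => ⨅ i, F i p) := by
  have hbdd i : BddBelow (range (F i)) := ⟨0, forall_mem_range.2 (h0 i)⟩
  have hwreg_nonneg i p : 0 ≤ wreg (F i) p :=
    (Real.iInf_nonneg (h0 i ·) : 0 ≤ downInf (F i) p).trans
      ((hmono i).downInf_le_wreg (hbdd i) le_rfl)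
  refine le_antisymm (downInf_mono ?_ fun p => ?_) fun q => le_ciInf fun q' => le_ciInf fun i => ?_
  · exact ⟨0, forall_mem_range.2 fun p => Real.iInf_nonneg (hwreg_nonneg · p)⟩
  · exact ciInf_mono ⟨0, forall_mem_range.2 (hwreg_nonneg · p)⟩ fun i =>
      (hmono i).wreg_le (hbdd i) p
  · calc downInf (fun p => ⨅ i, F i p) q
        ≤ downInf (F i) q :=
          downInf_mono ⟨0, forall_mem_range.2 fun p => Real.iInf_nonneg (h0 · p)⟩
            (fun p => ciInf_le ⟨0, forall_mem_range.2 (h0 · p)⟩ i) q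
      _ ≤ wreg (F i) q' := (hmono i).downInf_le_wreg (hbdd i) q'.2

end PartialOrder

end DownInf

theorem stmt6 {P : Type*} [PartialOrder P] (F : ℕ → P → ℝ)
    (hF : ∀ n p, F n p ∈ Set.Icc (0 : ℝ) 1)
    (hFmono : ∀ n, ∀ q p : P, q ≤ p → F n q ≤ F n p) (p : P) :
    wreg (fun p' => ⨅ n, F n p') p
      = ⨆ q : {q : P // q ≤ p}, ⨅ q' : {q' : P // q' ≤ (q : P)}, ⨅ n, wreg (F n) (q' : P) := by
  rw [wreg_eq_iSup_downInf, ← downInf_iInf_wreg (fun n p => (hF n p).1) fun n _ _ => hFmono n _ _]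
  rfl
end

section
/- Let P be a partially ordered set, let F : P → ℝ be an antitone function taking values in [0,1] (antitone meaning q ≤ p implies F(q) ≤ F(p)), and let G ⊆ P be nonempty, downward directed, and generic for F. Then inf_{p ∈ G} (1 − inf_{q ≤ p} F(q)) = 1 − inf_{p ∈ G} F(p). -/
/-! Since `G` is directed and `F` monotone, every `p ∈ G` has `inf_{q ≤ p} F q ≤ inf_G F`, which
gives `≥`. Genericity supplies `q ∈ G` at which `F q` and `inf_{q' ≤ q} F q'` are arbitrarily
close, which gives `≤`. -/

open Set

section InfBelow

variable {P : Type*} [Preorder P]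

/-- If `F` gives the forcing values of `φ`, then `1 - infBelow F p` is that of `¬φ` at `p`. -/
noncomputable def infBelow (F : P → ℝ) (p : P) : ℝ :=
  ⨅ q : {q : P // q ≤ p}, F q

theorem infBelow_le_of_le {F : P → ℝ} (hF : BddBelow (range F)) {p q : P} (h : q ≤ p) :
    infBelow F p ≤ F q :=
  ciInf_le (f := fun q : {q : P // q ≤ p} => F q)
    (hF.mono (range_comp_subset_range _ F)) ⟨q, h⟩

theorem infBelow_le_iInf_of_directedOn {F : P → ℝ} (hF : BddBelow (range F))
    (hmono : Monotone F) {G : Set P}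
    (hdir : ∀ a ∈ G, ∀ b ∈ G, ∃ c ∈ G, c ≤ a ∧ c ≤ b)
    {p : P} (hp : p ∈ G) : infBelow F p ≤ ⨅ g : G, F g := by
  have : Nonempty G := ⟨⟨p, hp⟩⟩
  refine le_ciInf fun g => ?_
  obtain ⟨c, -, hcp, hcg⟩ := hdir p hp g g.2
  exact (infBelow_le_of_le hF hcp).trans (hmono hcg)

end InfBelow

theorem ciInf_le_sub_ciInf_of_forall_exists_add_lt {ι : Type*} {f g : ι → ℝ} {c : ℝ}
    (hf : BddBelow (range f)) (hg : BddBelow (range g))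
    (h : ∀ r, c < r → ∃ i, f i + g i < r) : ⨅ i, g i ≤ c - ⨅ i, f i := by
  refine le_of_forall_pos_le_add fun ε hε => ?_
  obtain ⟨i, hi⟩ := h (c + ε) (by linarith)
  have hfi : ⨅ i, f i ≤ f i := ciInf_le hf i
  have hgi : ⨅ i, g i ≤ g i := ciInf_le hg i
  linarith

theorem stmt10_general {P : Type*} [PartialOrder P] (F : P → ℝ)
    (hF : ∀ p, F p ∈ Set.Icc (0 : ℝ) 1)
    (hFmono : ∀ q p : P, q ≤ p → F q ≤ F p)
    (G : Set P)
    (hdir : ∀ a ∈ G, ∀ b ∈ G, ∃ c ∈ G, c ≤ a ∧ c ≤ b)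
    (hgen : ∀ r : ℝ, 1 < r →
      ∃ q ∈ G, F q + (1 - ⨅ q' : {q' : P // q' ≤ q}, F (q' : P)) < r) :
    (⨅ p : G, (1 - ⨅ q : {q : P // q ≤ (p : P)}, F (q : P))) = 1 - ⨅ p : G, F (p : P) := by
  change ⨅ p : G, (1 - infBelow F p) = 1 - ⨅ p : G, F p
  have hbdd : BddBelow (range F) := ⟨0, by rintro _ ⟨p, rfl⟩; exact (hF p).1⟩
  obtain ⟨q₀, hq₀, -⟩ := hgen 2 one_lt_two
  have : Nonempty G := ⟨⟨q₀, hq₀⟩⟩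
  apply le_antisymm
  · refine ciInf_le_sub_ciInf_of_forall_exists_add_lt
      (hbdd.mono (range_comp_subset_range _ F)) ⟨0, ?_⟩ fun r hr => ?_
    · rintro _ ⟨p, rfl⟩
      linarith [infBelow_le_of_le hbdd (le_refl (p : P)), (hF p).2]
    · obtain ⟨q, hq, hlt⟩ := hgen r hr
      exact ⟨⟨q, hq⟩, hlt⟩
  · exact le_ciInf fun p => sub_le_sub_left
      (infBelow_le_iInf_of_directedOn hbdd (fun q p h => hFmono q p h) hdir p.2) 1

theorem stmt10 {P : Type*} [PartialOrder P] (F : P → ℝ)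
    (hF : ∀ p, F p ∈ Set.Icc (0 : ℝ) 1)
    (hFmono : ∀ q p : P, q ≤ p → F q ≤ F p)
    (G : Set P) (hne : G.Nonempty)
    (hdir : ∀ a ∈ G, ∀ b ∈ G, ∃ c ∈ G, c ≤ a ∧ c ≤ b)
    (hgen : ∀ r : ℝ, 1 < r →
      ∃ q ∈ G, F q + (1 - ⨅ q' : {q' : P // q' ≤ q}, F (q' : P)) < r) :
    (⨅ p : G, (1 - ⨅ q : {q : P // q ≤ (p : P)}, F (q : P))) = 1 - ⨅ p : G, F (p : P) :=
  stmt10_general F hF hFmono G hdir hgen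
end
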